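/- arXiv:0902.0886 — 2 statements merged into one kernel-verified Lean document; each statement's English description precedes it below -/
import Mathlib

section
/- For every μ > 0 and every r ∈ ℤ with r + ⌊μ⌋ ≥ 0, the translated Stein–Chen solution satisfies Σ_{l ∈ ℤ} |ĝ_{μ,r}(l) − ĝ_{μ,r}(l−1)| ≤ 2/μ. -/
noncomputable section

/-- The Stein–Chen solution `g_{μ,s}` for the one-point set `{s}`: the unique
function with `g 0 = 0` and `μ·g(j+1) − j·g(j) = 1[j=s] − e^{−μ} μ^s / s!`. -/
def steinChen (μ : ℝ) (s : ℕ) : ℕ → ℝ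
  | 0 => 0
  | j + 1 => ((j : ℝ) * steinChen μ s j + (if j = s then 1 else 0)
      - Real.exp (-μ) * μ ^ s / (Nat.factorial s : ℝ)) / μ

/-- The translated Stein–Chen solution `ĝ_{μ,r}`. -/
def ghat (μ : ℝ) (r : ℤ) (l : ℤ) : ℝ :=
  if l < -⌊μ⌋ then 0 else steinChen μ (r + ⌊μ⌋).toNat (l + ⌊μ⌋).toNat

/-!
Write `P` and `F` for the Poisson(μ) weights and distribution function. The Stein–Chen solution
is `g (j + 1) = P s (1[s ≤ j] - F j) / (μ P j)`. Since `P` is log-concave, `F j / P j` increases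
and `(1 - F j) / P j` decreases, so `g` decreases on `[0, s]`, where it is `≤ 0`, and on
`[s + 1, ∞)`, where it is `≥ 0`. Its total variation is therefore at most twice its single rise
`g (s + 1) - g s = (1 - F s) / μ + F (s - 1) / s`, which is `≤ 1 / μ` because
`μ F (s - 1) ≤ s F s`. Translating by `⌊μ⌋` does not change the total variation.
-/

open Finset

lemma sum_range_abs_sub_le_of_single_rise {g : ℕ → ℝ} {s : ℕ} {c : ℝ} (h0 : g 0 = 0)
    (hstep : ∀ j, j ≠ s → g (j + 1) ≤ g j) (hpos : ∀ j, s < j → 0 ≤ g j)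
    (hrise : g (s + 1) - g s ≤ c) (n : ℕ) :
    ∑ j ∈ range n, |g (j + 1) - g j| ≤ 2 * c := by
  have hdesc {m : ℕ} (hm : m ≤ s) : g s ≤ g m :=
    Nat.decreasingInduction (motive := fun m _ => g s ≤ g m)
      (fun _ hk ih => ih.trans (hstep _ hk.ne)) le_rfl hm
  have hvalley : g s ≤ 0 := h0 ▸ hdesc (Nat.zero_le s)
  have hpeak : 0 ≤ g (s + 1) := hpos _ s.lt_succ_self
  have habs (j : ℕ) : |g (j + 1) - g j|
      = (g j - g (j + 1)) + if j = s then 2 * (g (s + 1) - g s) else 0 := by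
    by_cases hj : j = s
    · subst hj
      rw [if_pos rfl, abs_of_nonneg (by linarith)]
      ring
    · rw [if_neg hj, abs_of_nonpos (by linarith [hstep j hj]), add_zero]
      ring
  rw [sum_congr rfl fun j _ => habs j, sum_add_distrib, sum_range_sub', sum_ite_eq', h0, zero_sub]
  split_ifs with hn
  · linarith [hpos n (mem_range.1 hn)]
  · linarith [hdesc (Nat.not_lt.1 (mt mem_range.2 hn))]

def poissonPmf (μ : ℝ) (j : ℕ) : ℝ := Real.exp (-μ) * μ ^ j / j.factorial

def poissonCdf (μ : ℝ) (j : ℕ) : ℝ := ∑ i ∈ range (j + 1), poissonPmf μ i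

section Poisson

variable {μ : ℝ}

lemma poissonPmf_pos (hμ : 0 < μ) (j : ℕ) : 0 < poissonPmf μ j := by
  unfold poissonPmf
  positivity

lemma poissonPmf_nonneg (hμ : 0 ≤ μ) (j : ℕ) : 0 ≤ poissonPmf μ j := by
  unfold poissonPmf
  positivity

lemma poissonPmf_succ (μ : ℝ) (j : ℕ) :
    poissonPmf μ (j + 1) = μ / (j + 1) * poissonPmf μ j := by
  simp only [poissonPmf, Nat.factorial_succ, Nat.cast_mul, Nat.cast_succ, pow_succ]
  field_simp

lemma hasSum_poissonPmf (μ : ℝ) : HasSum (poissonPmf μ) 1 := by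
  have h := (NormedSpace.expSeries_div_hasSum_exp μ).mul_left (Real.exp (-μ))
  rw [← Real.exp_eq_exp_ℝ, ← Real.exp_add, neg_add_cancel, Real.exp_zero] at h
  exact h.congr_fun fun j => mul_div_assoc _ _ _

lemma poissonCdf_zero (μ : ℝ) : poissonCdf μ 0 = poissonPmf μ 0 := by
  simp [poissonCdf]

lemma poissonCdf_succ (μ : ℝ) (j : ℕ) :
    poissonCdf μ (j + 1) = poissonCdf μ j + poissonPmf μ (j + 1) :=
  sum_range_succ _ _

lemma poissonCdf_nonneg (hμ : 0 < μ) (j : ℕ) : 0 ≤ poissonCdf μ j :=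
  sum_nonneg fun i _ => (poissonPmf_pos hμ i).le

lemma one_sub_poissonCdf_eq_tsum (μ : ℝ) (j : ℕ) :
    1 - poissonCdf μ j = ∑' k, poissonPmf μ (k + (j + 1)) := by
  rw [← (hasSum_poissonPmf μ).tsum_eq, poissonCdf,
    ← (hasSum_poissonPmf μ).summable.sum_add_tsum_nat_add (j + 1), add_sub_cancel_left]

lemma one_sub_poissonCdf_nonneg (hμ : 0 < μ) (j : ℕ) : 0 ≤ 1 - poissonCdf μ j := by
  rw [one_sub_poissonCdf_eq_tsum]
  exact tsum_nonneg fun k => (poissonPmf_pos hμ _).le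

/-- Log-concavity of the Poisson weights: `P (j + 1) / P j = μ / (j + 1)` decreases in `j`. -/
lemma poissonPmf_mul_poissonPmf_succ_le (hμ : 0 ≤ μ) {i j : ℕ} (hij : i ≤ j) :
    poissonPmf μ i * poissonPmf μ (j + 1) ≤ poissonPmf μ (i + 1) * poissonPmf μ j := by
  have hPij := mul_nonneg (poissonPmf_nonneg hμ i) (poissonPmf_nonneg hμ j)
  rw [poissonPmf_succ μ i, poissonPmf_succ μ j]
  calc _ = μ / (j + 1) * (poissonPmf μ i * poissonPmf μ j) := by ring
    _ ≤ μ / (i + 1) * (poissonPmf μ i * poissonPmf μ j) := by gcongr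
    _ = _ := by ring

lemma monotone_poissonCdf_div_poissonPmf (hμ : 0 < μ) :
    Monotone fun j => poissonCdf μ j / poissonPmf μ j := by
  refine monotone_nat_of_le_succ fun j => ?_
  rw [div_le_div_iff₀ (poissonPmf_pos hμ j) (poissonPmf_pos hμ (j + 1))]
  calc poissonCdf μ j * poissonPmf μ (j + 1)
      = ∑ i ∈ range (j + 1), poissonPmf μ i * poissonPmf μ (j + 1) := sum_mul _ _ _
    _ ≤ ∑ i ∈ range (j + 1), poissonPmf μ (i + 1) * poissonPmf μ j :=
        sum_le_sum fun i hi =>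
          poissonPmf_mul_poissonPmf_succ_le hμ.le (Nat.lt_succ_iff.1 (mem_range.1 hi))
    _ = (poissonCdf μ (j + 1) - poissonPmf μ 0) * poissonPmf μ j := by
        rw [← sum_mul, poissonCdf, sum_range_succ' _ (j + 1), add_sub_cancel_right]
    _ ≤ poissonCdf μ (j + 1) * poissonPmf μ j := by
        gcongr
        · exact (poissonPmf_pos hμ j).le
        · exact sub_le_self _ (poissonPmf_pos hμ 0).le

lemma antitone_one_sub_poissonCdf_div_poissonPmf (hμ : 0 < μ) :
    Antitone fun j => (1 - poissonCdf μ j) / poissonPmf μ j := by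
  have hsum (n : ℕ) : Summable fun k => poissonPmf μ (k + n) :=
    (summable_nat_add_iff n).2 (hasSum_poissonPmf μ).summable
  refine antitone_nat_of_succ_le fun j => ?_
  rw [div_le_div_iff₀ (poissonPmf_pos hμ (j + 1)) (poissonPmf_pos hμ j),
    one_sub_poissonCdf_eq_tsum, one_sub_poissonCdf_eq_tsum, ← tsum_mul_right, ← tsum_mul_right]
  refine Summable.tsum_le_tsum (fun k => ?_) ((hsum _).mul_right _) ((hsum _).mul_right _)
  have := poissonPmf_mul_poissonPmf_succ_le hμ.le (show j ≤ k + (j + 1) by omega)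
  exact (mul_comm _ _).trans_le (this.trans_eq (mul_comm _ _))

lemma mul_poissonCdf_le (hμ : 0 ≤ μ) (t : ℕ) :
    μ * poissonCdf μ t ≤ (t + 1) * poissonCdf μ (t + 1) := by
  calc μ * poissonCdf μ t = ∑ i ∈ range (t + 1), ((i : ℝ) + 1) * poissonPmf μ (i + 1) := by
        rw [poissonCdf, mul_sum]
        refine sum_congr rfl fun i _ => ?_
        rw [poissonPmf_succ]
        field_simp
    _ ≤ ∑ i ∈ range (t + 1), ((t : ℝ) + 1) * poissonPmf μ (i + 1) := by
        refine sum_le_sum fun i hi => ?_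
        have : (i : ℝ) ≤ t := by exact_mod_cast Nat.lt_succ_iff.1 (mem_range.1 hi)
        gcongr
        exact poissonPmf_nonneg hμ _
    _ = (t + 1) * (poissonCdf μ (t + 1) - poissonPmf μ 0) := by
        rw [← mul_sum, poissonCdf, sum_range_succ' _ (t + 1), add_sub_cancel_right]
    _ ≤ (t + 1) * poissonCdf μ (t + 1) := by
        gcongr
        exact sub_le_self _ (poissonPmf_nonneg hμ 0)

end Poisson

section SteinChen

variable {μ : ℝ}

@[simp] lemma steinChen_zero (μ : ℝ) (s : ℕ) : steinChen μ s 0 = 0 := rfl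

lemma mul_poissonPmf_mul_steinChen_succ (hμ : μ ≠ 0) (s j : ℕ) :
    μ * poissonPmf μ j * steinChen μ s (j + 1)
      = poissonPmf μ s * ((if s ≤ j then 1 else 0) - poissonCdf μ j) := by
  have hrec (i : ℕ) : steinChen μ s (i + 1)
      = (i * steinChen μ s i + (if i = s then 1 else 0) - poissonPmf μ s) / μ := rfl
  induction j with
  | zero =>
    rw [hrec, poissonCdf_zero, Nat.cast_zero, zero_mul, zero_add]
    rcases Nat.eq_zero_or_pos s with rfl | hs
    · rw [if_pos rfl, if_pos le_rfl]
      field_simp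
    · rw [if_neg hs.ne, if_neg (Nat.not_le.2 hs)]
      field_simp
      ring
  | succ j ih =>
    have hPsucc : ((j : ℝ) + 1) * poissonPmf μ (j + 1) = μ * poissonPmf μ j := by
      rw [poissonPmf_succ]
      field_simp
    have hind : poissonPmf μ s * (if s ≤ j then 1 else 0)
        + poissonPmf μ (j + 1) * (if j + 1 = s then 1 else 0)
        = poissonPmf μ s * (if s ≤ j + 1 then 1 else 0) := by
      rcases lt_trichotomy s (j + 1) with h | rfl | h
      · simp [Nat.lt_succ_iff.1 h, h.ne', h.le]
      · simp
      · simp [h.ne, h.not_ge, Nat.not_le.2 (Nat.lt_of_succ_lt h)]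
    rw [hrec, poissonCdf_succ]
    push_cast
    field_simp
    linear_combination ih + hind + steinChen μ s (j + 1) * hPsucc

lemma steinChen_succ_of_lt (hμ : 0 < μ) {s j : ℕ} (h : j < s) :
    steinChen μ s (j + 1) = -(poissonPmf μ s / μ * (poissonCdf μ j / poissonPmf μ j)) := by
  have key := mul_poissonPmf_mul_steinChen_succ hμ.ne' s j
  rw [if_neg (Nat.not_le.2 h)] at key
  have := (poissonPmf_pos hμ j).ne'
  field_simp
  linear_combination key

lemma steinChen_succ_of_le (hμ : 0 < μ) {s j : ℕ} (h : s ≤ j) :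
    steinChen μ s (j + 1) = poissonPmf μ s / μ * ((1 - poissonCdf μ j) / poissonPmf μ j) := by
  have key := mul_poissonPmf_mul_steinChen_succ hμ.ne' s j
  rw [if_pos h] at key
  have := (poissonPmf_pos hμ j).ne'
  field_simp
  linear_combination key

lemma steinChen_nonpos (hμ : 0 < μ) {s j : ℕ} (h : j ≤ s) : steinChen μ s j ≤ 0 := by
  cases j with
  | zero => exact (steinChen_zero μ s).le
  | succ i =>
    rw [steinChen_succ_of_lt hμ h, neg_nonpos]
    exact mul_nonneg (div_nonneg (poissonPmf_pos hμ s).le hμ.le)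
      (div_nonneg (poissonCdf_nonneg hμ i) (poissonPmf_pos hμ i).le)

lemma steinChen_nonneg (hμ : 0 < μ) {s j : ℕ} (h : s < j) : 0 ≤ steinChen μ s j := by
  obtain ⟨i, rfl⟩ := Nat.exists_eq_add_of_lt h
  rw [steinChen_succ_of_le hμ (Nat.le_add_right s i)]
  exact mul_nonneg (div_nonneg (poissonPmf_pos hμ s).le hμ.le)
    (div_nonneg (one_sub_poissonCdf_nonneg hμ _) (poissonPmf_pos hμ _).le)

lemma steinChen_succ_le (hμ : 0 < μ) {s j : ℕ} (h : j ≠ s) :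
    steinChen μ s (j + 1) ≤ steinChen μ s j := by
  have hc : 0 ≤ poissonPmf μ s / μ := div_nonneg (poissonPmf_pos hμ s).le hμ.le
  rcases h.lt_or_gt with h | h
  · cases j with
    | zero => exact steinChen_nonpos hμ h
    | succ i =>
      rw [steinChen_succ_of_lt hμ h, steinChen_succ_of_lt hμ (Nat.lt_of_succ_lt h),
        neg_le_neg_iff]
      exact mul_le_mul_of_nonneg_left (monotone_poissonCdf_div_poissonPmf hμ i.le_succ) hc
  · obtain ⟨i, rfl⟩ := Nat.exists_eq_add_of_lt h
    rw [steinChen_succ_of_le hμ (by omega), steinChen_succ_of_le hμ (by omega)]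
    exact mul_le_mul_of_nonneg_left
      (antitone_one_sub_poissonCdf_div_poissonPmf hμ (s + i).le_succ) hc

lemma steinChen_succ_sub_steinChen_le (hμ : 0 < μ) (s : ℕ) :
    steinChen μ s (s + 1) - steinChen μ s s ≤ 1 / μ := by
  have hpeak : steinChen μ s (s + 1) = (1 - poissonCdf μ s) / μ := by
    rw [steinChen_succ_of_le hμ le_rfl]
    have := (poissonPmf_pos hμ s).ne'
    field_simp
  rw [hpeak]
  cases s with
  | zero =>
    rw [steinChen_zero, sub_zero]
    gcongr
    exact sub_le_self _ (poissonCdf_nonneg hμ 0)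
  | succ t =>
    have hval : poissonPmf μ (t + 1) / μ * (poissonCdf μ t / poissonPmf μ t)
        = poissonCdf μ t / (t + 1) := by
      rw [poissonPmf_succ]
      have := (poissonPmf_pos hμ t).ne'
      field_simp
    have hcdf : poissonCdf μ t / (t + 1) ≤ poissonCdf μ (t + 1) / μ := by
      rw [div_le_div_iff₀ (by positivity) hμ]
      linarith [mul_poissonCdf_le hμ.le t]
    rw [steinChen_succ_of_lt hμ t.lt_succ_self, hval, sub_neg_eq_add]
    calc (1 - poissonCdf μ (t + 1)) / μ + poissonCdf μ t / (t + 1)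
        ≤ (1 - poissonCdf μ (t + 1)) / μ + poissonCdf μ (t + 1) / μ := by gcongr
      _ = 1 / μ := by ring

lemma sum_range_abs_sub_steinChen_le (hμ : 0 < μ) (s n : ℕ) :
    ∑ j ∈ range n, |steinChen μ s (j + 1) - steinChen μ s j| ≤ 2 / μ := by
  rw [div_eq_mul_one_div]
  exact sum_range_abs_sub_le_of_single_rise (steinChen_zero μ s) (fun _ => steinChen_succ_le hμ)
    (fun _ => steinChen_nonneg hμ) (steinChen_succ_sub_steinChen_le hμ s) n

end SteinChen

lemma ghat_eq_zero {μ : ℝ} {r l : ℤ} (hl : l ≤ -⌊μ⌋) : ghat μ r l = 0 := by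
  unfold ghat
  split_ifs
  · rfl
  · rw [show (l + ⌊μ⌋).toNat = 0 by omega, steinChen_zero]

lemma ghat_natCast_sub_floor (μ : ℝ) (r : ℤ) (j : ℕ) :
    ghat μ r (j - ⌊μ⌋) = steinChen μ (r + ⌊μ⌋).toNat j := by
  rw [ghat, if_neg (by omega), sub_add_cancel, Int.toNat_natCast]

lemma hasSum_abs_sub_ghat (μ : ℝ) (r : ℤ) {a : ℝ}
    (h : HasSum
      (fun j => |steinChen μ (r + ⌊μ⌋).toNat (j + 1) - steinChen μ (r + ⌊μ⌋).toNat j|) a) :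
    HasSum (fun l => |ghat μ r l - ghat μ r (l - 1)|) a := by
  let e : ℕ → ℤ := fun j => ((j + 1 : ℕ) : ℤ) - ⌊μ⌋
  have he : Function.Injective e := fun i j hij => by simp only [e] at hij; omega
  refine (he.hasSum_iff fun l hl => ?_).1 (h.congr_fun fun j => ?_)
  · have hl' : l ≤ -⌊μ⌋ := by
      by_contra hlt
      exact hl ⟨(l - 1 + ⌊μ⌋).toNat, by simp only [e]; omega⟩
    rw [ghat_eq_zero hl', ghat_eq_zero (by omega), sub_zero, abs_zero]
  · have hprev : e j - 1 = (j : ℤ) - ⌊μ⌋ := by simp only [e]; push_cast; ring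
    rw [Function.comp_apply, hprev, ghat_natCast_sub_floor, ghat_natCast_sub_floor]

theorem ghat_first_difference_l1_general (μ : ℝ) (hμ : 0 < μ) (r : ℤ) :
    Summable (fun l : ℤ => |ghat μ r l - ghat μ r (l - 1)|) ∧
    (∑' l : ℤ, |ghat μ r l - ghat μ r (l - 1)|) ≤ 2 / μ := by
  have hbound := sum_range_abs_sub_steinChen_le hμ (r + ⌊μ⌋).toNat
  have hsum := hasSum_abs_sub_ghat μ r
    (summable_of_sum_range_le (fun _ => abs_nonneg _) hbound).hasSum
  exact ⟨hsum.summable,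
    hsum.tsum_eq ▸ Real.tsum_le_of_sum_range_le (fun _ => abs_nonneg _) hbound⟩

/-- `Σ_l |ĝ_{μ,r}(l) − ĝ_{μ,r}(l−1)| ≤ 2/μ`. -/
theorem ghat_first_difference_l1 (μ : ℝ) (hμ : 0 < μ) (r : ℤ) (hr : 0 ≤ r + ⌊μ⌋) :
    Summable (fun l : ℤ => |ghat μ r l - ghat μ r (l - 1)|) ∧
    (∑' l : ℤ, |ghat μ r l - ghat μ r (l - 1)|) ≤ 2 / μ :=
  ghat_first_difference_l1_general μ hμ r
end
end

section
/- For every μ > 0 and every r ∈ ℤ with r + ⌊μ⌋ ≥ 0, there exists a function h : ℤ → [0,∞) with Σ_{l ∈ ℤ} h(l) ≤ 3 such that for all l ∈ ℤ, |(l − ⟨μ⟩)·(ĝ_{μ,r}(l+1) − ĝ_{μ,r}(l))| ≤ h(l+1) + h(l) + 1/μ. -/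
/-!
Write `π` for the Poisson(μ) weights, `F` for their distribution function and `g = g_{μ,s}`.
Summing the Stein–Chen equation against `π` gives `μ π(j) g(j+1) = π(s) (1[s ≤ j] − F(j))`.
Since `π(k+1)/π(k) = μ/(k+1)` decreases in `k`, `F/π` increases and `(1 − F)/π` decreases, so
`g` is nonpositive and nonincreasing on `[0, s]`, jumps up by at most `1/μ` at `s`, and is
nonnegative and nonincreasing afterwards: `|g| ≤ 1/μ` and the total variation of `g` is at most
`2/μ`. Subtracting the Stein–Chen equations at `j` and `j + 1` gives
`(j − μ) Δg(j) = μ Δg(j+1) − μ Δg(j) − g(j+1) + 1[j = s] − 1[j+1 = s]`,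
so `h(j) = μ |Δg(j)| + 1[j = s]`, of total mass at most `2 + 1`, does the job after the shift
`l = j − ⌊μ⌋`, under which `l − ⟨μ⟩ = j − μ`.
-/

noncomputable section

open Finset

def poissonWeight (μ : ℝ) (k : ℕ) : ℝ := Real.exp (-μ) * μ ^ k / k.factorial

def poissonCDF (μ : ℝ) (j : ℕ) : ℝ := ∑ k ∈ range (j + 1), poissonWeight μ k

def poissonTail (μ : ℝ) (j : ℕ) : ℝ := ∑' k, poissonWeight μ (k + (j + 1))

section Poisson

variable {μ : ℝ}

lemma poissonWeight_pos (hμ : 0 < μ) (k : ℕ) : 0 < poissonWeight μ k := by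
  unfold poissonWeight; positivity

lemma poissonWeight_nonneg (hμ : 0 ≤ μ) (k : ℕ) : 0 ≤ poissonWeight μ k := by
  unfold poissonWeight; positivity

lemma hasSum_poissonWeight (hμ : 0 ≤ μ) : HasSum (poissonWeight μ) 1 :=
  ProbabilityTheory.hasSum_one_poissonMeasure ⟨μ, hμ⟩

lemma poissonWeight_succ (k : ℕ) :
    poissonWeight μ (k + 1) = μ * poissonWeight μ k / (k + 1) := by
  simp only [poissonWeight, Nat.factorial_succ, Nat.cast_mul, Nat.cast_succ, pow_succ]
  field_simp

lemma poissonWeight_succ_mul_le (hμ : 0 ≤ μ) {m n : ℕ} (h : m ≤ n) :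
    poissonWeight μ (n + 1) * poissonWeight μ m ≤ poissonWeight μ n * poissonWeight μ (m + 1) := by
  have hnum : 0 ≤ μ * poissonWeight μ n * poissonWeight μ m :=
    mul_nonneg (mul_nonneg hμ (poissonWeight_nonneg hμ n)) (poissonWeight_nonneg hμ m)
  calc poissonWeight μ (n + 1) * poissonWeight μ m
      = μ * poissonWeight μ n * poissonWeight μ m / (n + 1) := by
        rw [poissonWeight_succ]; ring
    _ ≤ μ * poissonWeight μ n * poissonWeight μ m / (m + 1) :=
        div_le_div_of_nonneg_left hnum (by positivity) (by exact_mod_cast Nat.succ_le_succ h)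
    _ = poissonWeight μ n * poissonWeight μ (m + 1) := by rw [poissonWeight_succ]; ring

lemma poissonCDF_add_poissonTail (hμ : 0 ≤ μ) (j : ℕ) : poissonCDF μ j + poissonTail μ j = 1 :=
  ((hasSum_poissonWeight hμ).summable.sum_add_tsum_nat_add (j + 1)).trans
    (hasSum_poissonWeight hμ).tsum_eq

lemma poissonCDF_nonneg (hμ : 0 ≤ μ) (j : ℕ) : 0 ≤ poissonCDF μ j :=
  sum_nonneg fun k _ => poissonWeight_nonneg hμ k

lemma poissonTail_nonneg (hμ : 0 ≤ μ) (j : ℕ) : 0 ≤ poissonTail μ j :=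
  tsum_nonneg fun _ => poissonWeight_nonneg hμ _

lemma monotone_poissonCDF_div_poissonWeight (hμ : 0 < μ) :
    Monotone fun j => poissonCDF μ j / poissonWeight μ j := by
  refine monotone_nat_of_le_succ fun j => ?_
  rw [div_le_div_iff₀ (poissonWeight_pos hμ j) (poissonWeight_pos hμ (j + 1))]
  calc poissonCDF μ j * poissonWeight μ (j + 1)
      = ∑ k ∈ range (j + 1), poissonWeight μ (j + 1) * poissonWeight μ k := by
        rw [poissonCDF, sum_mul]; simp only [mul_comm]
    _ ≤ ∑ k ∈ range (j + 1), poissonWeight μ (k + 1) * poissonWeight μ j := by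
        refine sum_le_sum fun k hk => ?_
        rw [mul_comm (poissonWeight μ (k + 1))]
        exact poissonWeight_succ_mul_le hμ.le (Nat.lt_succ_iff.mp (mem_range.mp hk))
    _ ≤ poissonCDF μ (j + 1) * poissonWeight μ j := by
        rw [poissonCDF, sum_range_succ' _ (j + 1), ← sum_mul, add_mul]
        exact le_add_of_nonneg_right
          (mul_nonneg (poissonWeight_nonneg hμ.le 0) (poissonWeight_nonneg hμ.le j))

lemma antitone_poissonTail_div_poissonWeight (hμ : 0 < μ) :
    Antitone fun j => poissonTail μ j / poissonWeight μ j := by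
  refine antitone_nat_of_succ_le fun j => ?_
  rw [div_le_div_iff₀ (poissonWeight_pos hμ (j + 1)) (poissonWeight_pos hμ j)]
  have summable_shift (n : ℕ) : Summable fun k => poissonWeight μ (k + n) :=
    (summable_nat_add_iff n).mpr (hasSum_poissonWeight hμ.le).summable
  rw [poissonTail, poissonTail, ← tsum_mul_right, ← tsum_mul_right]
  exact Summable.tsum_le_tsum
    (fun k => poissonWeight_succ_mul_le (n := k + (j + 1)) hμ.le (by omega))
    ((summable_shift _).mul_right _) ((summable_shift _).mul_right _)

end Poisson

def steinChenWeight (μ : ℝ) (s j : ℕ) : ℝ :=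
  μ * |steinChen μ s (j + 1) - steinChen μ s j| + if j = s then 1 else 0

section SteinChen

variable {μ : ℝ} {s : ℕ}

lemma steinChen_equation (hμ : μ ≠ 0) (j : ℕ) :
    μ * steinChen μ s (j + 1) - j * steinChen μ s j
      = (if j = s then 1 else 0) - poissonWeight μ s := by
  rw [steinChen, poissonWeight]
  field_simp
  ring

lemma mul_poissonWeight_mul_steinChen_succ (hμ : 0 < μ) (j : ℕ) :
    μ * poissonWeight μ j * steinChen μ s (j + 1)
      = poissonWeight μ s * ((if s ≤ j then 1 else 0) - poissonCDF μ j) := by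
  induction j with
  | zero =>
    have h0 := steinChen_equation (s := s) hμ.ne' 0
    simp only [poissonCDF, zero_add, sum_range_one, Nat.cast_zero, zero_mul, sub_zero] at h0 ⊢
    obtain rfl | hs := eq_or_ne s 0
    · simp only [if_true, le_refl] at h0 ⊢
      linear_combination poissonWeight μ 0 * h0
    · simp only [hs.symm, hs, if_false, nonpos_iff_eq_zero] at h0 ⊢
      linear_combination poissonWeight μ 0 * h0
  | succ j ih =>
    have hj := steinChen_equation (s := s) hμ.ne' (j + 1)
    have hrec : ((j : ℝ) + 1) * poissonWeight μ (j + 1) = μ * poissonWeight μ j := by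
      rw [poissonWeight_succ]; field_simp
    rw [poissonCDF, sum_range_succ, ← poissonCDF]
    push_cast at hj
    rcases lt_trichotomy (j + 1) s with h | rfl | h
    · simp only [h.ne, h.not_ge, (Nat.lt_of_succ_lt h).not_ge, if_false] at hj ih ⊢
      linear_combination poissonWeight μ (j + 1) * hj + steinChen μ s (j + 1) * hrec + ih
    · simp only [le_refl, (Nat.lt_succ_self j).not_ge, if_true, if_false] at hj ih ⊢
      linear_combination poissonWeight μ (j + 1) * hj + steinChen μ (j + 1) (j + 1) * hrec + ih
    · simp only [h.ne', h.le, Nat.le_of_lt_succ h, if_true, if_false] at hj ih ⊢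
      linear_combination poissonWeight μ (j + 1) * hj + steinChen μ s (j + 1) * hrec + ih

lemma mul_steinChen_succ_of_lt (hμ : 0 < μ) {j : ℕ} (h : j < s) :
    μ * steinChen μ s (j + 1) = -(poissonWeight μ s * (poissonCDF μ j / poissonWeight μ j)) := by
  have key := mul_poissonWeight_mul_steinChen_succ (s := s) hμ j
  rw [if_neg h.not_ge] at key
  have := (poissonWeight_pos hμ j).ne'
  field_simp
  linear_combination key

lemma mul_steinChen_succ_of_le (hμ : 0 < μ) {j : ℕ} (h : s ≤ j) :
    μ * steinChen μ s (j + 1) = poissonWeight μ s * (poissonTail μ j / poissonWeight μ j) := by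
  have key := mul_poissonWeight_mul_steinChen_succ (s := s) hμ j
  rw [if_pos h, ← poissonCDF_add_poissonTail hμ.le j, add_sub_cancel_left] at key
  have := (poissonWeight_pos hμ j).ne'
  field_simp
  linear_combination key

lemma neg_mul_steinChen_mem_Icc (hμ : 0 < μ) {j : ℕ} (h : j ≤ s) :
    -(μ * steinChen μ s j) ∈ Set.Icc 0 (poissonCDF μ s) := by
  cases j with
  | zero => simpa [steinChen] using poissonCDF_nonneg hμ.le s
  | succ i =>
    rw [mul_steinChen_succ_of_lt hμ h, neg_neg]
    have hπs := poissonWeight_pos hμ s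
    refine ⟨by have := poissonCDF_nonneg hμ.le i; have := poissonWeight_pos hμ i; positivity, ?_⟩
    calc poissonWeight μ s * (poissonCDF μ i / poissonWeight μ i)
        ≤ poissonWeight μ s * (poissonCDF μ s / poissonWeight μ s) :=
          mul_le_mul_of_nonneg_left (monotone_poissonCDF_div_poissonWeight hμ (by omega)) hπs.le
      _ = poissonCDF μ s := mul_div_cancel₀ _ hπs.ne'

lemma mul_steinChen_mem_Icc (hμ : 0 < μ) {j : ℕ} (h : s < j) :
    μ * steinChen μ s j ∈ Set.Icc 0 (poissonTail μ s) := by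
  obtain ⟨i, rfl⟩ : ∃ i, j = i + 1 := ⟨j - 1, by omega⟩
  rw [mul_steinChen_succ_of_le hμ (by omega)]
  have hπs := poissonWeight_pos hμ s
  refine ⟨by have := poissonTail_nonneg hμ.le i; have := poissonWeight_pos hμ i; positivity, ?_⟩
  calc poissonWeight μ s * (poissonTail μ i / poissonWeight μ i)
      ≤ poissonWeight μ s * (poissonTail μ s / poissonWeight μ s) :=
        mul_le_mul_of_nonneg_left (antitone_poissonTail_div_poissonWeight hμ (by omega)) hπs.le
    _ = poissonTail μ s := mul_div_cancel₀ _ hπs.ne'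

lemma abs_steinChen_le (hμ : 0 < μ) (j : ℕ) : |steinChen μ s j| ≤ 1 / μ := by
  have hsum := poissonCDF_add_poissonTail hμ.le s
  have hG := poissonCDF_nonneg hμ.le s
  have hT := poissonTail_nonneg hμ.le s
  have hbound : |μ * steinChen μ s j| ≤ 1 := by
    rcases le_or_gt j s with h | h
    · obtain ⟨h₀, h₁⟩ := neg_mul_steinChen_mem_Icc hμ h
      rw [abs_le]; constructor <;> linarith
    · obtain ⟨h₀, h₁⟩ := mul_steinChen_mem_Icc hμ h
      rw [abs_le]; constructor <;> linarith
  rwa [abs_mul, abs_of_pos hμ, ← le_div_iff₀' hμ] at hbound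

lemma steinChen_succ_le_of_ne (hμ : 0 < μ) {j : ℕ} (h : j ≠ s) :
    steinChen μ s (j + 1) ≤ steinChen μ s j := by
  refine le_of_mul_le_mul_left ?_ hμ
  have hπs := (poissonWeight_pos hμ s).le
  rcases Nat.lt_or_gt_of_ne h with h | h
  · cases j with
    | zero => simpa [steinChen] using (neg_mul_steinChen_mem_Icc (s := s) hμ h).1
    | succ i =>
      rw [mul_steinChen_succ_of_lt hμ h, mul_steinChen_succ_of_lt hμ (by omega), neg_le_neg_iff]
      exact mul_le_mul_of_nonneg_left
        (monotone_poissonCDF_div_poissonWeight hμ (Nat.le_succ i)) hπs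
  · obtain ⟨i, rfl⟩ : ∃ i, j = i + 1 := ⟨j - 1, by omega⟩
    rw [mul_steinChen_succ_of_le hμ (by omega), mul_steinChen_succ_of_le hμ (by omega)]
    exact mul_le_mul_of_nonneg_left
      (antitone_poissonTail_div_poissonWeight hμ (Nat.le_succ i)) hπs

lemma mul_steinChen_succ_sub_self_mem_Icc (hμ : 0 < μ) :
    μ * (steinChen μ s (s + 1) - steinChen μ s s) ∈ Set.Icc 0 1 := by
  obtain ⟨h₀, h₁⟩ := neg_mul_steinChen_mem_Icc (s := s) hμ le_rfl
  obtain ⟨h₂, h₃⟩ := mul_steinChen_mem_Icc (s := s) hμ (Nat.lt_succ_self s)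
  have := poissonCDF_add_poissonTail hμ.le s
  constructor <;> linarith

lemma sum_range_abs_steinChen_sub_le (hμ : 0 < μ) (N : ℕ) :
    ∑ j ∈ range N, |steinChen μ s (j + 1) - steinChen μ s j| ≤ 2 / μ := by
  set M := max N (s + 1)
  have abs_eq (j : ℕ) : |steinChen μ s (j + 1) - steinChen μ s j|
      = -(steinChen μ s (j + 1) - steinChen μ s j)
        + if j = s then 2 * (steinChen μ s (s + 1) - steinChen μ s s) else 0 := by
    split_ifs with h
    · subst h
      have := (mul_steinChen_succ_sub_self_mem_Icc (s := j) hμ).1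
      rw [abs_of_nonneg (nonneg_of_mul_nonneg_right (by linarith) hμ)]
      ring
    · rw [abs_of_nonpos (sub_nonpos.mpr (steinChen_succ_le_of_ne hμ h))]
      ring
  have h_jump := (mul_steinChen_succ_sub_self_mem_Icc (s := s) hμ).2
  have h_end := (mul_steinChen_mem_Icc (s := s) hμ (by omega : s < M)).1
  calc ∑ j ∈ range N, |steinChen μ s (j + 1) - steinChen μ s j|
      ≤ ∑ j ∈ range M, |steinChen μ s (j + 1) - steinChen μ s j| :=
        sum_le_sum_of_subset_of_nonneg (range_subset_range.mpr (le_max_left _ _))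
          fun _ _ _ => abs_nonneg _
    _ = -steinChen μ s M + 2 * (steinChen μ s (s + 1) - steinChen μ s s) := by
        rw [sum_congr rfl fun j _ => abs_eq j, sum_add_distrib, sum_neg_distrib, sum_range_sub,
          sum_ite_eq' (range M) s, if_pos (mem_range.mpr (by omega))]
        simp [steinChen]
    _ ≤ 2 / μ := by
        rw [le_div_iff₀ hμ]
        nlinarith

lemma steinChenWeight_nonneg (hμ : 0 < μ) (j : ℕ) : 0 ≤ steinChenWeight μ s j := by
  unfold steinChenWeight
  split_ifs <;> positivity

lemma sum_range_steinChenWeight_le (hμ : 0 < μ) (n : ℕ) :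
    ∑ j ∈ range n, steinChenWeight μ s j ≤ 3 := by
  have h_var := sum_range_abs_steinChen_sub_le (s := s) hμ n
  have h_ind : ∑ j ∈ range n, (if j = s then (1 : ℝ) else 0) ≤ 1 := by
    rw [sum_ite_eq' (range n) s]
    split_ifs <;> norm_num
  rw [le_div_iff₀' hμ, mul_sum] at h_var
  simp only [steinChenWeight, sum_add_distrib]
  linarith

lemma abs_sub_mul_steinChen_sub_le (hμ : 0 < μ) (j : ℕ) :
    |((j : ℝ) - μ) * (steinChen μ s (j + 1) - steinChen μ s j)|
      ≤ steinChenWeight μ s (j + 1) + steinChenWeight μ s j + 1 / μ := by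
  have identity : ((j : ℝ) - μ) * (steinChen μ s (j + 1) - steinChen μ s j)
      = μ * (steinChen μ s (j + 1 + 1) - steinChen μ s (j + 1))
        - μ * (steinChen μ s (j + 1) - steinChen μ s j) - steinChen μ s (j + 1)
        + ((if j = s then 1 else 0) - if j + 1 = s then 1 else 0) := by
    have h₁ := steinChen_equation (s := s) hμ.ne' (j + 1)
    have h₀ := steinChen_equation (s := s) hμ.ne' j
    push_cast at h₁
    linear_combination h₀ - h₁
  have abs_mul_eq (x : ℝ) : |μ * x| = μ * |x| := by rw [abs_mul, abs_of_pos hμ]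
  have indicator_mem (p : Prop) [Decidable p] : (if p then (1 : ℝ) else 0) ∈ Set.Icc 0 1 := by
    split_ifs <;> norm_num
  have hg := abs_le.mp (abs_steinChen_le (s := s) hμ (j + 1))
  have hd₁ := abs_le.mp (abs_mul_eq (steinChen μ s (j + 1 + 1) - steinChen μ s (j + 1))).le
  have hd₀ := abs_le.mp (abs_mul_eq (steinChen μ s (j + 1) - steinChen μ s j)).le
  have he₁ := indicator_mem (j + 1 = s)
  have he₀ := indicator_mem (j = s)
  rw [steinChenWeight, steinChenWeight, identity, abs_le]
  constructor <;> linarith [he₁.1, he₁.2, he₀.1, he₀.2]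

end SteinChen

lemma ghat_of_le {μ : ℝ} {r l : ℤ} (h : l ≤ -⌊μ⌋) : ghat μ r l = 0 := by
  unfold ghat
  split_ifs
  · rfl
  · rw [show (l + ⌊μ⌋).toNat = 0 by omega]
    rfl

lemma ghat_neg_floor_add (μ : ℝ) (r : ℤ) (j : ℕ) :
    ghat μ r (-⌊μ⌋ + j) = steinChen μ (r + ⌊μ⌋).toNat j := by
  rw [ghat, if_neg (by omega)]
  congr
  omega

lemma Int.summable_and_tsum_le_of_sum_range_le {f : ℤ → ℝ} {a : ℤ} {C : ℝ}
    (hf : ∀ l, 0 ≤ f l) (h_low : ∀ l < a, f l = 0)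
    (h_sum : ∀ n : ℕ, ∑ j ∈ Finset.range n, f (a + j) ≤ C) :
    Summable f ∧ ∑' l, f l ≤ C := by
  have he : Function.Injective fun j : ℕ => a + j := fun i j hij => by simpa using hij
  have h_range (l : ℤ) (hl : l ∉ Set.range fun j : ℕ => a + j) : f l = 0 :=
    h_low l (by by_contra! h; exact hl ⟨(l - a).toNat, by simp; omega⟩)
  have h_nat : Summable fun j : ℕ => f (a + j) :=
    summable_of_sum_range_le (fun j => hf _) h_sum
  refine ⟨(he.summable_iff h_range).mp h_nat, ?_⟩
  rw [← he.tsum_eq fun l hl => by_contra fun h => hl (h_range l h)]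
  exact Real.tsum_le_of_sum_range_le (fun j => hf _) h_sum

theorem ghat_weighted_difference_bound_general (μ : ℝ) (hμ : 0 < μ) (r : ℤ) :
    ∃ h : ℤ → ℝ, (∀ l : ℤ, 0 ≤ h l) ∧ Summable h ∧ (∑' l : ℤ, h l) ≤ 3 ∧
      ∀ l : ℤ, |((l : ℝ) - (μ - ⌊μ⌋)) * (ghat μ r (l + 1) - ghat μ r l)|
        ≤ h (l + 1) + h l + 1 / μ := by
  set s := (r + ⌊μ⌋).toNat
  set h : ℤ → ℝ := fun l => if l < -⌊μ⌋ then 0 else steinChenWeight μ s (l + ⌊μ⌋).toNat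
  have h_nonneg (l : ℤ) : 0 ≤ h l := by
    simp only [h]
    split_ifs
    exacts [le_rfl, steinChenWeight_nonneg hμ _]
  have h_shift (j : ℕ) : h (-⌊μ⌋ + j) = steinChenWeight μ s j := by simp [h]
  obtain ⟨h_summable, h_tsum⟩ := Int.summable_and_tsum_le_of_sum_range_le h_nonneg
    (fun l hl => if_pos hl) fun n => by simpa only [h_shift] using sum_range_steinChenWeight_le hμ n
  refine ⟨h, h_nonneg, h_summable, h_tsum, fun l => ?_⟩
  rcases lt_or_ge l (-⌊μ⌋) with hl | hl
  · rw [ghat_of_le (by omega), ghat_of_le hl.le, sub_self, mul_zero, abs_zero]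
    linarith [h_nonneg l, h_nonneg (l + 1), one_div_pos.mpr hμ]
  · obtain ⟨j, rfl⟩ : ∃ j : ℕ, l = -⌊μ⌋ + j := ⟨(l + ⌊μ⌋).toNat, by omega⟩
    have h_cast : ((-⌊μ⌋ + j : ℤ) : ℝ) - (μ - ⌊μ⌋) = j - μ := by push_cast; ring
    rw [show -⌊μ⌋ + (j : ℤ) + 1 = -⌊μ⌋ + (j + 1 : ℕ) by push_cast; ring, h_cast, h_shift,
      h_shift, ghat_neg_floor_add, ghat_neg_floor_add]
    exact abs_sub_mul_steinChen_sub_le hμ j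

/-- There is a nonnegative `h` with `Σ_l h(l) ≤ 3` such that
`|(l − ⟨μ⟩)·(ĝ_{μ,r}(l+1) − ĝ_{μ,r}(l))| ≤ h(l+1) + h(l) + 1/μ` for all `l`. -/
theorem ghat_weighted_difference_bound (μ : ℝ) (hμ : 0 < μ) (r : ℤ) (hr : 0 ≤ r + ⌊μ⌋) :
    ∃ h : ℤ → ℝ, (∀ l : ℤ, 0 ≤ h l) ∧ Summable h ∧ (∑' l : ℤ, h l) ≤ 3 ∧
      ∀ l : ℤ, |((l : ℝ) - (μ - ⌊μ⌋)) * (ghat μ r (l + 1) - ghat μ r l)|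
        ≤ h (l + 1) + h l + 1 / μ :=
  ghat_weighted_difference_bound_general μ hμ r
end
end
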